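/- There exists a surjective group homomorphism π : W₂ → H₂ (determined by sending α, α₁, α₂ to the corresponding generators of the first factor of H₂, α₃ to a generator of the C_p factor, and x, y, z, w to 1) whose kernel K has order p⁴ and satisfies K ≤ Z(W₂) and K ≤ [W₂, W₂], where Z(W₂) is the center and [W₂,W₂] the commutator subgroup of W₂. -/

import Mathlib

/-- The commutator convention used in the paper: `[a, b] = a⁻¹ * b⁻¹ * a * b`. -/
def pcomm {G : Type*} [Group G] (a b : G) : G := a⁻¹ * b⁻¹ * a * b

/-- `IsW2 p W α α₁ α₂ α₃ x y z w` says that `W` is (a copy of) the finite group `W₂`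
of order `p ^ 9` with presentation on generators `α, α₁, α₂, α₃, x, y, z, w` and relations
`[α₁,α] = α₂`, `[α₁,α₂] = x`, `[α,α₂] = y`, `[α₃,α₁] = z`, `[α₃,α] = w`, `[α₃,α₂] = 1`,
`α^(p²) = 1`, `α₁^p = α₂^p = α₃^p = 1`, `x^p = y^p = z^p = w^p = 1`, and
`x, y, z, w` commute with all generators. -/
def IsW2 (p : ℕ) (W : Type*) [Group W] (α a₁ a₂ a₃ x y z w : W) : Prop :=
  Subgroup.closure {α, a₁, a₂, a₃, x, y, z, w} = ⊤ ∧
  Nat.card W = p ^ 9 ∧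
  pcomm a₁ α = a₂ ∧ pcomm a₁ a₂ = x ∧ pcomm α a₂ = y ∧
  pcomm a₃ a₁ = z ∧ pcomm a₃ α = w ∧ pcomm a₃ a₂ = 1 ∧
  α ^ p ^ 2 = 1 ∧ a₁ ^ p = 1 ∧ a₂ ^ p = 1 ∧ a₃ ^ p = 1 ∧
  x ^ p = 1 ∧ y ^ p = 1 ∧ z ^ p = 1 ∧ w ^ p = 1 ∧
  ∀ c ∈ ({x, y, z, w} : Set W), ∀ g ∈ ({α, a₁, a₂, a₃, x, y, z, w} : Set W),
    c * g = g * c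

/-- `IsH2 p H α α₁ α₂ b` says that `H` is (a copy of) `H₂ = K × C_p`, where `K` is the
group of order `p⁴` generated by `α, α₁, α₂` with `[α₁,α] = α₂`, `[α₁,α₂] = [α,α₂] = 1`,
`α^(p²) = α₁^p = α₂^p = 1`, and `b` generates the central direct factor `C_p`;
so `H` has order `p⁵`. -/
def IsH2 (p : ℕ) (H : Type*) [Group H] (α a₁ a₂ b : H) : Prop :=
  Subgroup.closure {α, a₁, a₂, b} = ⊤ ∧
  Nat.card H = p ^ 5 ∧
  pcomm a₁ α = a₂ ∧ pcomm a₁ a₂ = 1 ∧ pcomm α a₂ = 1 ∧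
  α ^ p ^ 2 = 1 ∧ a₁ ^ p = 1 ∧ a₂ ^ p = 1 ∧ b ^ p = 1 ∧
  ∀ g ∈ ({α, a₁, a₂, b} : Set H), b * g = g * b

/-!
The elements `x, y, z, w` commute with all generators, so `N = ⟨x, y, z, w⟩` is a central
subgroup generated by four elements of order dividing `p`, whence `|N| ≤ p⁴`. Modulo `N` the
images of `α, α₁, α₂, α₃` satisfy the defining relations of `H₂`, and collecting a word in them
into the form `α^i α₁^j α₂^k α₃^l` gives `|W₂ / N| ≤ p⁵`. As `|W₂| = p⁹`, both bounds are
equalities. The subgroup of `(W₂ / N) × H₂` generated by the pairs of corresponding generators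
satisfies the same relations, so it also has order at most `p⁵`; it projects onto both factors,
hence is the graph of an isomorphism `W₂ / N ≃ H₂`, and `π` is the quotient map followed by it.
Its kernel `N` is central and generated by commutators.
-/

section Pcomm

variable {G : Type*} [Group G]

open scoped commutatorElement in
theorem pcomm_eq_commutatorElement (a b : G) : pcomm a b = ⁅a⁻¹, b⁻¹⁆ := by
  rw [pcomm, commutatorElement_def, inv_inv, inv_inv]

theorem pcomm_eq_one_iff {a b : G} : pcomm a b = 1 ↔ Commute a b := by
  rw [pcomm_eq_commutatorElement, commutatorElement_eq_one_iff_commute, Commute.inv_inv_iff]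

theorem mul_eq_of_pcomm_eq {a b c : G} (h : pcomm a b = c) : a * b = b * a * c := by
  rw [← h, pcomm]; group

theorem map_pcomm {H : Type*} [Group H] (f : G →* H) (a b : G) :
    f (pcomm a b) = pcomm (f a) (f b) := by
  simp only [pcomm, map_mul, map_inv]

theorem pcomm_mem_commutator (a b : G) : pcomm a b ∈ commutator G := by
  rw [pcomm_eq_commutatorElement, commutator_def]
  exact Subgroup.commutator_mem_commutator (Subgroup.mem_top _) (Subgroup.mem_top _)

end Pcomm

section Closure

variable {G : Type*} [Group G]

theorem Subgroup.closure_subset_of_one_mem_of_mul_mem [Finite G] {s X : Set G} (h1 : 1 ∈ X)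
    (hmul : ∀ x ∈ X, ∀ g ∈ s, x * g ∈ X) : (Subgroup.closure s : Set G) ⊆ X := by
  intro x hx
  rw [SetLike.mem_coe, ← Subgroup.mem_toSubmonoid, Subgroup.closure_toSubmonoid_of_finite]
    at hx
  induction hx using Submonoid.closure_induction_right with
  | one => exact h1
  | mul_right x _ g hg ih => exact hmul x ih g hg

def orderedPowers (A B C D : G) : Set G :=
  {g | ∃ i j k l : ℕ, g = A ^ i * B ^ j * C ^ k * D ^ l}

theorem one_mem_orderedPowers (A B C D : G) : 1 ∈ orderedPowers A B C D :=
  ⟨0, 0, 0, 0, by simp⟩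

theorem natCard_orderedPowers_le {A B C D : G} {a b c d : ℕ}
    (ha : 0 < a) (hb : 0 < b) (hc : 0 < c) (hd : 0 < d)
    (hA : A ^ a = 1) (hB : B ^ b = 1) (hC : C ^ c = 1) (hD : D ^ d = 1) :
    Nat.card (orderedPowers A B C D) ≤ a * b * c * d := by
  set f : Fin a × Fin b × Fin c × Fin d → G :=
    fun t => A ^ (t.1 : ℕ) * B ^ (t.2.1 : ℕ) * C ^ (t.2.2.1 : ℕ) * D ^ (t.2.2.2 : ℕ)
  have hsub : orderedPowers A B C D ⊆ Set.range f := by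
    rintro _ ⟨i, j, k, l, rfl⟩
    refine ⟨(⟨i % a, Nat.mod_lt _ ha⟩, ⟨j % b, Nat.mod_lt _ hb⟩, ⟨k % c, Nat.mod_lt _ hc⟩,
      ⟨l % d, Nat.mod_lt _ hd⟩), ?_⟩
    simp only [f, ← pow_eq_pow_mod _ hA, ← pow_eq_pow_mod _ hB, ← pow_eq_pow_mod _ hC,
      ← pow_eq_pow_mod _ hD]
  calc Nat.card (orderedPowers A B C D) ≤ Nat.card (Set.range f) :=
        Nat.card_mono (Set.finite_range f) hsub
    _ ≤ Nat.card (Fin a × Fin b × Fin c × Fin d) := Finite.card_range_le f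
    _ = a * b * c * d := by simp only [Nat.card_prod, Nat.card_fin, mul_assoc]

end Closure

section Relations

variable {G : Type*} [Group G]

structure H2Relations (p : ℕ) (A B C D : G) : Prop where
  pcomm_BA : pcomm B A = C
  pcomm_BC : pcomm B C = 1
  pcomm_AC : pcomm A C = 1
  pcomm_DA : pcomm D A = 1
  pcomm_DB : pcomm D B = 1
  pcomm_DC : pcomm D C = 1
  pow_A : A ^ p ^ 2 = 1
  pow_B : B ^ p = 1
  pow_C : C ^ p = 1
  pow_D : D ^ p = 1

namespace H2Relations

variable {p : ℕ} {A B C D : G}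

theorem prod {H : Type*} [Group H] {A' B' C' D' : H} (h : H2Relations p A B C D)
    (h' : H2Relations p A' B' C' D') :
    H2Relations p (A, A') (B, B') (C, C') (D, D') where
  pcomm_BA := Prod.ext h.pcomm_BA h'.pcomm_BA
  pcomm_BC := Prod.ext h.pcomm_BC h'.pcomm_BC
  pcomm_AC := Prod.ext h.pcomm_AC h'.pcomm_AC
  pcomm_DA := Prod.ext h.pcomm_DA h'.pcomm_DA
  pcomm_DB := Prod.ext h.pcomm_DB h'.pcomm_DB
  pcomm_DC := Prod.ext h.pcomm_DC h'.pcomm_DC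
  pow_A := Prod.ext h.pow_A h'.pow_A
  pow_B := Prod.ext h.pow_B h'.pow_B
  pow_C := Prod.ext h.pow_C h'.pow_C
  pow_D := Prod.ext h.pow_D h'.pow_D

theorem pow_mul_self (h : H2Relations p A B C D) (j : ℕ) : B ^ j * A = A * B ^ j * C ^ j := by
  have hBC : Commute B C := pcomm_eq_one_iff.mp h.pcomm_BC
  have hconj : SemiconjBy A (B * C) B := by
    rw [SemiconjBy, ← mul_assoc, ← mul_eq_of_pcomm_eq h.pcomm_BA]
  rw [mul_assoc, ← hBC.mul_pow, (hconj.pow_right j).eq]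

theorem mul_mem_orderedPowers (h : H2Relations p A B C D) {x g : G}
    (hx : x ∈ orderedPowers A B C D) (hg : g ∈ ({A, B, C, D} : Set G)) :
    x * g ∈ orderedPowers A B C D := by
  obtain ⟨i, j, k, l, rfl⟩ := hx
  have hCA : Commute C A := (pcomm_eq_one_iff.mp h.pcomm_AC).symm
  have hCB : Commute C B := (pcomm_eq_one_iff.mp h.pcomm_BC).symm
  have hDA : Commute D A := pcomm_eq_one_iff.mp h.pcomm_DA
  have hDB : Commute D B := pcomm_eq_one_iff.mp h.pcomm_DB
  have hDC : Commute D C := pcomm_eq_one_iff.mp h.pcomm_DC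
  rcases hg with hg | hg | hg | hg <;> rw [hg]
  · refine ⟨i + 1, j, j + k, l, ?_⟩
    calc A ^ i * B ^ j * C ^ k * D ^ l * A = A ^ i * (B ^ j * A) * C ^ k * D ^ l := by
          simp only [mul_assoc, (hDA.pow_left l).eq, (hCA.pow_left k).left_comm]
      _ = A ^ (i + 1) * B ^ j * C ^ (j + k) * D ^ l := by
          rw [h.pow_mul_self, pow_succ, pow_add]; simp only [mul_assoc]
  · refine ⟨i, j + 1, k, l, ?_⟩
    simp only [mul_assoc, (hDB.pow_left l).eq, (hCB.pow_left k).left_comm, pow_succ]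
  · refine ⟨i, j, k + 1, l, ?_⟩
    simp only [mul_assoc, (hDC.pow_left l).eq, pow_succ]
  · exact ⟨i, j, k, l + 1, by simp only [mul_assoc, pow_succ]⟩

theorem natCard_closure_le [Finite G] (h : H2Relations p A B C D) (hp : 0 < p) :
    Nat.card (Subgroup.closure {A, B, C, D}) ≤ p ^ 5 :=
  calc Nat.card (Subgroup.closure {A, B, C, D})
      ≤ Nat.card (orderedPowers A B C D) :=
        Nat.card_mono (Set.toFinite _) (Subgroup.closure_subset_of_one_mem_of_mul_mem
          (one_mem_orderedPowers A B C D) fun _ hx _ hg => h.mul_mem_orderedPowers hx hg)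
    _ ≤ p ^ 2 * p * p * p := natCard_orderedPowers_le (by positivity) hp hp hp
        h.pow_A h.pow_B h.pow_C h.pow_D
    _ = p ^ 5 := by ring

end H2Relations

end Relations

section Center

variable {G : Type*} [Group G]

theorem mem_center_of_forall_mul_comm {s : Set G} (hs : Subgroup.closure s = ⊤) {c : G}
    (hc : ∀ g ∈ s, c * g = g * c) : c ∈ Subgroup.center G := by
  rw [← Subgroup.centralizer_univ, ← Subgroup.coe_top, ← hs, Subgroup.centralizer_closure,
    Subgroup.mem_centralizer_iff]
  exact fun g hg => (hc g hg).symm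

theorem natCard_closure_le_of_subset_center [Finite G] {x y z w : G} {p : ℕ} (hp : 0 < p)
    (hs : {x, y, z, w} ⊆ (Subgroup.center G : Set G))
    (hx : x ^ p = 1) (hy : y ^ p = 1) (hz : z ^ p = 1) (hw : w ^ p = 1) :
    Nat.card (Subgroup.closure {x, y, z, w}) ≤ p ^ 4 := by
  have hmul : ∀ a ∈ orderedPowers x y z w, ∀ g ∈ ({x, y, z, w} : Set G),
      a * g ∈ orderedPowers x y z w := by
    rintro _ ⟨i, j, k, l, rfl⟩ g hg
    have hgc : ∀ a, Commute a g := fun a => Subgroup.mem_center_iff.mp (hs hg) a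
    rcases hg with hg | hg | hg | hg <;> subst g
    · refine ⟨i + 1, j, k, l, ?_⟩
      simp only [mul_assoc, (hgc (w ^ l)).eq, (hgc (z ^ k)).left_comm, (hgc (y ^ j)).left_comm,
        pow_succ]
    · refine ⟨i, j + 1, k, l, ?_⟩
      simp only [mul_assoc, (hgc (w ^ l)).eq, (hgc (z ^ k)).left_comm, pow_succ]
    · refine ⟨i, j, k + 1, l, ?_⟩
      simp only [mul_assoc, (hgc (w ^ l)).eq, pow_succ]
    · exact ⟨i, j, k, l + 1, by simp only [mul_assoc, pow_succ]⟩
  calc Nat.card (Subgroup.closure {x, y, z, w})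
      ≤ Nat.card (orderedPowers x y z w) := Nat.card_mono (Set.toFinite _)
        (Subgroup.closure_subset_of_one_mem_of_mul_mem (one_mem_orderedPowers x y z w) hmul)
    _ ≤ p * p * p * p := natCard_orderedPowers_le hp hp hp hp hx hy hz hw
    _ = p ^ 4 := by ring

end Center

section Graph

variable {G₁ G₂ : Type*} [Group G₁] [Group G₂]

theorem surjective_of_closure_image_eq_top (f : G₁ →* G₂) {s : Set G₁}
    (hs : Subgroup.closure (f '' s) = ⊤) :
    Function.Surjective (f.comp (Subgroup.closure s).subtype) := by
  rw [← MonoidHom.range_eq_top, MonoidHom.range_comp, Subgroup.range_subtype,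
    MonoidHom.map_closure, hs]

theorem exists_mulEquiv_of_natCard_closure_le [Finite G₁] [Finite G₂] {s : Set (G₁ × G₂)}
    (h₁ : Subgroup.closure (Prod.fst '' s) = ⊤) (h₂ : Subgroup.closure (Prod.snd '' s) = ⊤)
    (hcard : Nat.card G₁ = Nat.card G₂) (hs : Nat.card (Subgroup.closure s) ≤ Nat.card G₁) :
    ∃ e : G₁ ≃* G₂, ∀ a b, (a, b) ∈ s → e a = b := by
  have hfst := surjective_of_closure_image_eq_top (MonoidHom.fst G₁ G₂) h₁
  have hsnd := surjective_of_closure_image_eq_top (MonoidHom.snd G₁ G₂) h₂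
  have hS : Nat.card (Subgroup.closure s) = Nat.card G₁ :=
    le_antisymm hs (Nat.card_le_card_of_surjective _ hfst)
  let e₁ := MulEquiv.ofBijective _ ((Nat.bijective_iff_surjective_and_card _).mpr ⟨hfst, hS⟩)
  let e₂ := MulEquiv.ofBijective _
    ((Nat.bijective_iff_surjective_and_card _).mpr ⟨hsnd, hS.trans hcard⟩)
  refine ⟨e₁.symm.trans e₂, fun a b hab => ?_⟩
  have : e₁.symm a = ⟨(a, b), Subgroup.subset_closure hab⟩ := e₁.symm_apply_eq.mpr rfl
  simp only [MulEquiv.trans_apply, this]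
  rfl

end Graph

theorem Subgroup.normal_of_le_center {G : Type*} [Group G] {N : Subgroup G}
    (h : N ≤ Subgroup.center G) : N.Normal :=
  ⟨fun n hn g => by rwa [Subgroup.mem_center_iff.mp (h hn) g, mul_inv_cancel_right]⟩

theorem IsH2.h2Relations {p : ℕ} {H : Type*} [Group H] {α a₁ a₂ b : H}
    (hH : IsH2 p H α a₁ a₂ b) : H2Relations p α a₁ a₂ b := by
  obtain ⟨-, -, h₁, h₂, h₃, hα, ha₁, ha₂, hb, hbg⟩ := hH
  exact
    { pcomm_BA := h₁
      pcomm_BC := h₂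
      pcomm_AC := h₃
      pcomm_DA := pcomm_eq_one_iff.mpr (hbg α (by simp))
      pcomm_DB := pcomm_eq_one_iff.mpr (hbg a₁ (by simp))
      pcomm_DC := pcomm_eq_one_iff.mpr (hbg a₂ (by simp))
      pow_A := hα
      pow_B := ha₁
      pow_C := ha₂
      pow_D := hb }

namespace IsW2

variable {p : ℕ} {W : Type*} [Group W] {α a₁ a₂ a₃ x y z w : W}

theorem subset_center (hW : IsW2 p W α a₁ a₂ a₃ x y z w) :
    {x, y, z, w} ⊆ (Subgroup.center W : Set W) := by
  obtain ⟨hgen, -, -, -, -, -, -, -, -, -, -, -, -, -, -, -, hcomm⟩ := hW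
  exact fun c hc => mem_center_of_forall_mul_comm hgen (hcomm c hc)

theorem subset_commutator (hW : IsW2 p W α a₁ a₂ a₃ x y z w) :
    {x, y, z, w} ⊆ (commutator W : Set W) := by
  obtain ⟨-, -, -, rfl, rfl, rfl, rfl, -⟩ := hW
  simp only [Set.insert_subset_iff, Set.singleton_subset_iff, SetLike.mem_coe,
    pcomm_mem_commutator, and_self]

variable (N : Subgroup W) [N.Normal]

theorem h2Relations_quotient (hW : IsW2 p W α a₁ a₂ a₃ x y z w)
    (hN : {x, y, z, w} ⊆ (N : Set W)) :
    H2Relations p (α : W ⧸ N) (a₁ : W ⧸ N) (a₂ : W ⧸ N) (a₃ : W ⧸ N) := by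
  obtain ⟨-, -, h₁, h₂, h₃, h₄, h₅, h₆, hα, ha₁, ha₂, ha₃, -⟩ := hW
  have hmk : ∀ c ∈ ({x, y, z, w} : Set W), (c : W ⧸ N) = 1 := fun c hc =>
    (QuotientGroup.eq_one_iff c).mpr (hN hc)
  have hpcomm : ∀ a b : W, pcomm (a : W ⧸ N) (b : W ⧸ N) = QuotientGroup.mk (pcomm a b) :=
    fun a b => (map_pcomm (QuotientGroup.mk' N) a b).symm
  have hpow : ∀ (a : W) (n : ℕ), a ^ n = 1 → (a : W ⧸ N) ^ n = 1 := fun a n h => by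
    rw [← QuotientGroup.mk_pow, h, QuotientGroup.mk_one]
  exact
    { pcomm_BA := by rw [hpcomm, h₁]
      pcomm_BC := by rw [hpcomm, h₂, hmk x (by simp)]
      pcomm_AC := by rw [hpcomm, h₃, hmk y (by simp)]
      pcomm_DA := by rw [hpcomm, h₅, hmk w (by simp)]
      pcomm_DB := by rw [hpcomm, h₄, hmk z (by simp)]
      pcomm_DC := by rw [hpcomm, h₆, QuotientGroup.mk_one]
      pow_A := hpow α _ hα
      pow_B := hpow a₁ _ ha₁
      pow_C := hpow a₂ _ ha₂
      pow_D := hpow a₃ _ ha₃ }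

theorem closure_quotient_eq_top (hW : IsW2 p W α a₁ a₂ a₃ x y z w)
    (hN : {x, y, z, w} ⊆ (N : Set W)) :
    Subgroup.closure {(α : W ⧸ N), (a₁ : W ⧸ N), (a₂ : W ⧸ N), (a₃ : W ⧸ N)} = ⊤ := by
  have hmk : ∀ c ∈ ({x, y, z, w} : Set W), (c : W ⧸ N) = 1 := fun c hc =>
    (QuotientGroup.eq_one_iff c).mpr (hN hc)
  rw [eq_top_iff, ← Subgroup.map_top_of_surjective _ (QuotientGroup.mk'_surjective N), ← hW.1,
    MonoidHom.map_closure, Subgroup.closure_le]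
  simp only [Set.image_insert_eq, Set.image_singleton, QuotientGroup.mk'_apply,
    hmk x (by simp), hmk y (by simp), hmk z (by simp), hmk w (by simp), Set.insert_subset_iff,
    Set.singleton_subset_iff, SetLike.mem_coe, Subgroup.one_mem, and_true]
  exact ⟨Subgroup.subset_closure (by simp), Subgroup.subset_closure (by simp),
    Subgroup.subset_closure (by simp), Subgroup.subset_closure (by simp)⟩

theorem natCard_quotient_and_natCard (hp : 0 < p) (hW : IsW2 p W α a₁ a₂ a₃ x y z w)
    (hN : N = Subgroup.closure {x, y, z, w}) :
    Nat.card (W ⧸ N) = p ^ 5 ∧ Nat.card N = p ^ 4 := by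
  have : Finite W := Nat.finite_of_card_ne_zero (by rw [hW.2.1]; positivity)
  have hxN : {x, y, z, w} ⊆ (N : Set W) := hN ▸ Subgroup.subset_closure
  have hQ : Nat.card (W ⧸ N) ≤ p ^ 5 := by
    rw [← Subgroup.card_top, ← closure_quotient_eq_top N hW hxN]
    exact (h2Relations_quotient N hW hxN).natCard_closure_le hp
  have hNle : Nat.card N ≤ p ^ 4 := by
    have hc := hW.subset_center
    obtain ⟨-, -, -, -, -, -, -, -, -, -, -, -, hx, hy, hz, hw, -⟩ := hW
    rw [hN]
    exact natCard_closure_le_of_subset_center hp hc hx hy hz hw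
  refine (mul_eq_mul_iff_eq_and_eq_of_pos hQ hNle Nat.card_pos (by positivity)).mp ?_
  rw [← Subgroup.card_eq_card_quotient_mul_card_subgroup, hW.2.1]
  ring

end IsW2

theorem stmt_4_general (p : ℕ) (hp : p.Prime)
    (W : Type) [Group W] (α a₁ a₂ a₃ x y z w : W)
    (hW : IsW2 p W α a₁ a₂ a₃ x y z w)
    (H : Type) [Group H] (α' a₁' a₂' b : H)
    (hH : IsH2 p H α' a₁' a₂' b) :
    ∃ π : W →* H, Function.Surjective π ∧
      π α = α' ∧ π a₁ = a₁' ∧ π a₂ = a₂' ∧ π a₃ = b ∧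
      π x = 1 ∧ π y = 1 ∧ π z = 1 ∧ π w = 1 ∧
      Nat.card π.ker = p ^ 4 ∧
      π.ker ≤ Subgroup.center W ∧ π.ker ≤ commutator W := by
  set N := Subgroup.closure ({x, y, z, w} : Set W)
  have : N.Normal := Subgroup.normal_of_le_center ((Subgroup.closure_le _).mpr hW.subset_center)
  obtain ⟨hQ, hN⟩ := hW.natCard_quotient_and_natCard N hp.pos rfl
  have : Finite (W ⧸ N) :=
    Nat.finite_of_card_ne_zero (by rw [hQ]; exact pow_ne_zero _ hp.ne_zero)
  have : Finite H := Nat.finite_of_card_ne_zero (by rw [hH.2.1]; exact pow_ne_zero _ hp.ne_zero)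
  obtain ⟨e, he⟩ := exists_mulEquiv_of_natCard_closure_le
    (s := {((α : W ⧸ N), α'), ((a₁ : W ⧸ N), a₁'), ((a₂ : W ⧸ N), a₂'), ((a₃ : W ⧸ N), b)})
    (by simpa only [Set.image_insert_eq, Set.image_singleton]
      using hW.closure_quotient_eq_top N Subgroup.subset_closure)
    (by simpa only [Set.image_insert_eq, Set.image_singleton] using hH.1)
    (hQ.trans hH.2.1.symm)
    (hQ ▸ ((hW.h2Relations_quotient N Subgroup.subset_closure).prod
      hH.h2Relations).natCard_closure_le hp.pos)
  have he₁ : ∀ c ∈ ({x, y, z, w} : Set W), e c = 1 := fun c hc => by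
    rw [(QuotientGroup.eq_one_iff c).mpr (Subgroup.subset_closure hc), map_one]
  refine ⟨(e : W ⧸ N →* H).comp (QuotientGroup.mk' N),
    e.surjective.comp (QuotientGroup.mk'_surjective N), he _ _ (by simp), he _ _ (by simp),
    he _ _ (by simp), he _ _ (by simp), he₁ x (by simp), he₁ y (by simp), he₁ z (by simp),
    he₁ w (by simp), ?_, ?_, ?_⟩ <;> rw [MonoidHom.ker_mulEquiv_comp, QuotientGroup.ker_mk']
  · exact hN
  · exact (Subgroup.closure_le _).mpr hW.subset_center
  · exact (Subgroup.closure_le _).mpr hW.subset_commutator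

/-- There is a surjective homomorphism `π : W₂ → H₂` sending `α, α₁, α₂` to the generators
of `K`, `α₃` to the generator of the `C_p` factor, and `x, y, z, w` to `1`, whose kernel `K`
has order `p⁴`, is central, and is contained in the commutator subgroup of `W₂`. -/
theorem stmt_4 (p : ℕ) (hp : p.Prime) (hodd : Odd p)
    (W : Type) [Group W] (α a₁ a₂ a₃ x y z w : W)
    (hW : IsW2 p W α a₁ a₂ a₃ x y z w)
    (H : Type) [Group H] (α' a₁' a₂' b : H)
    (hH : IsH2 p H α' a₁' a₂' b) :
    ∃ π : W →* H, Function.Surjective π ∧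
      π α = α' ∧ π a₁ = a₁' ∧ π a₂ = a₂' ∧ π a₃ = b ∧
      π x = 1 ∧ π y = 1 ∧ π z = 1 ∧ π w = 1 ∧
      Nat.card π.ker = p ^ 4 ∧
      π.ker ≤ Subgroup.center W ∧ π.ker ≤ commutator W :=
  stmt_4_general p hp W α a₁ a₂ a₃ x y z w hW H α' a₁' a₂' b hH
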